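/- arXiv:1310.2872 — 2 statements merged into one kernel-verified Lean document; each statement's English description precedes it below -/
import Mathlib

section
/- Let G be a finite simple graph on vertex set {x_{11}, …, x_{n1}}, let m_1, …, m_n ≥ 2 be integers, and let G_1, …, G_n be connected finite simple graphs with V(G_i) = {x_{i1}, …, x_{im_i}}. If the attachment graph G(G_1, …, G_n) is vertex decomposable, then G_i is vertex decomposable for every i = 1, …, n. -/
variable {V : Type*} [DecidableEq V]

/-- `S` is an independent set of the induced subgraph of `G` on the vertex set `A`. -/
def IsIndepIn (G : SimpleGraph V) (A S : Finset V) : Prop :=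
  S ⊆ A ∧ ∀ u ∈ S, ∀ v ∈ S, ¬G.Adj u v

/-- `S` is a maximal independent set of the induced subgraph of `G` on the vertex set `A`. -/
def IsMaxIndepIn (G : SimpleGraph V) (A S : Finset V) : Prop :=
  IsIndepIn G A S ∧ ∀ T, IsIndepIn G A T → S ⊆ T → S = T

/-- The induced subgraph of `G` on `A` is unmixed: all maximal independent sets
have the same cardinality. -/
def UnmixedOn (G : SimpleGraph V) (A : Finset V) : Prop :=
  ∀ S T, IsMaxIndepIn G A S → IsMaxIndepIn G A T → S.card = T.card

open scoped Classical in
/-- The vertex set `A \ N_G[x]`. -/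
noncomputable def delClosedNbhd (G : SimpleGraph V) (A : Finset V) (x : V) : Finset V :=
  A.filter fun y => y ≠ x ∧ ¬G.Adj x y

/-- The induced subgraph of `G` on `A` is vertex decomposable. -/
inductive VertexDecomposableOn (G : SimpleGraph V) : Finset V → Prop
  | edgeless (A : Finset V) (h : ∀ u ∈ A, ∀ v ∈ A, ¬G.Adj u v) : VertexDecomposableOn G A
  | shed (A : Finset V) (x : V) (hx : x ∈ A)
      (hlink : VertexDecomposableOn G (delClosedNbhd G A x))
      (hdel : VertexDecomposableOn G (A.erase x))
      (hexch : ∀ S, IsIndepIn G (delClosedNbhd G A x) S →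
        ∃ y ∈ A, G.Adj x y ∧ IsIndepIn G (A.erase x) (insert y S)) :
      VertexDecomposableOn G A

/-- `x` is a shedding vertex of the induced subgraph of `G` on `A`. -/
def IsSheddingVertexOn (G : SimpleGraph V) (A : Finset V) (x : V) : Prop :=
  x ∈ A ∧
  VertexDecomposableOn G (delClosedNbhd G A x) ∧
  VertexDecomposableOn G (A.erase x) ∧
  ∀ S, IsIndepIn G (delClosedNbhd G A x) S →
    ∃ y ∈ A, G.Adj x y ∧ IsIndepIn G (A.erase x) (insert y S)

/-- The independence complex of the induced subgraph of `G` on `A` is shellable: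
there is an ordering `F 0, F 1, …` of its facets (the maximal independent sets) such
that for every `i`, every face of the subcomplex `(⋃ j < i, ⟨F j⟩) ∩ ⟨F i⟩` is contained
in a face of that subcomplex of cardinality `(F i).card - 1` (i.e. the subcomplex is
pure of dimension `dim (F i) - 1`). -/
def ShellableOn (G : SimpleGraph V) (A : Finset V) : Prop :=
  ∃ (t : ℕ) (F : Fin t → Finset V),
    Function.Injective F ∧
    (∀ S, IsMaxIndepIn G A S ↔ ∃ i, F i = S) ∧
    ∀ i : Fin t, ∀ S : Finset V, S ⊆ F i → (∃ j, j < i ∧ S ⊆ F j) →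
      ∃ S' : Finset V, S ⊆ S' ∧ S' ⊆ F i ∧ (∃ j, j < i ∧ S' ⊆ F j) ∧
        S'.card = (F i).card - 1

/-- A graph is chordal if every cycle of length at least four has a chord, i.e. an
edge of the graph joining two vertices of the cycle that is not an edge of the cycle. -/
def IsChordal (G : SimpleGraph V) : Prop :=
  ∀ (x : V) (w : G.Walk x x), w.IsCycle → 4 ≤ w.length →
    ∃ u v, u ∈ w.support ∧ v ∈ w.support ∧ G.Adj u v ∧ s(u, v) ∉ w.edges

/-- The induced subgraph of `G` on `A` is a cycle graph on `m` vertices. -/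
def IsCycleGraphOn (G : SimpleGraph V) (A : Finset V) (m : ℕ) : Prop :=
  (∀ u v, G.Adj u v → u ∈ A ∧ v ∈ A) ∧
  Nonempty (G.induce (A : Set V) ≃g SimpleGraph.cycleGraph m)

/-- The independence number of the induced subgraph of `G` on `A`. -/
noncomputable def indepNumOn (G : SimpleGraph V) (A : Finset V) : ℕ :=
  sSup {k | ∃ S, IsIndepIn G A S ∧ S.card = k}

/-!
The independence complex of `G_i` is a link in that of the attachment graph `H`. In every
other block `G_j` pick a maximal independent set avoiding `x_j`; it exists because `x_j` has a
neighbour in the connected graph `G_j`. The union `S` of these sets is independent in `H`, and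
`H \ N_H[S]` is exactly `G_i`. Vertex decomposability passes to links `A \ N[S]`, by induction
along the shedding vertices: a shedding vertex `x` either lies in `S`, or is adjacent to `S`,
or stays a shedding vertex of the link.
-/

open Finset

open scoped Classical in
/-- The vertex set `A \ N_G[S]`. -/
noncomputable def delIndepSet (G : SimpleGraph V) (A S : Finset V) : Finset V :=
  A.filter fun y => y ∉ S ∧ ∀ s ∈ S, ¬G.Adj s y

section Link

variable {G G' : SimpleGraph V} {A S T : Finset V} {s x y : V}

@[simp]
lemma mem_delIndepSet : y ∈ delIndepSet G A S ↔ y ∈ A ∧ y ∉ S ∧ ∀ s ∈ S, ¬G.Adj s y := by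
  simp [delIndepSet]

@[simp]
lemma mem_delClosedNbhd : y ∈ delClosedNbhd G A x ↔ y ∈ A ∧ y ≠ x ∧ ¬G.Adj x y := by
  simp [delClosedNbhd]

lemma delIndepSet_subset : delIndepSet G A S ⊆ A := fun _ hy => (mem_delIndepSet.1 hy).1

lemma delClosedNbhd_subset : delClosedNbhd G A x ⊆ A := fun _ hy => (mem_delClosedNbhd.1 hy).1

lemma delClosedNbhd_subset_erase : delClosedNbhd G A x ⊆ A.erase x := fun _ hy =>
  mem_erase.2 ⟨(mem_delClosedNbhd.1 hy).2.1, (mem_delClosedNbhd.1 hy).1⟩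

lemma delIndepSet_eq_of_mem (hx : x ∈ S) :
    delIndepSet G A S = delIndepSet G (delClosedNbhd G A x) (S.erase x) := by
  ext y
  simp only [mem_delIndepSet, mem_delClosedNbhd, mem_erase]
  constructor
  · rintro ⟨hyA, hyS, hSy⟩
    exact ⟨⟨hyA, by rintro rfl; exact hyS hx, hSy x hx⟩, fun h => hyS h.2,
      fun s hs => hSy s hs.2⟩
  · rintro ⟨⟨hyA, hyx, hxy⟩, hyS, hSy⟩
    refine ⟨hyA, fun h => hyS ⟨hyx, h⟩, fun s hs => ?_⟩
    rcases eq_or_ne s x with rfl | hsx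
    · exact hxy
    · exact hSy s ⟨hsx, hs⟩

lemma delIndepSet_eq_of_adj (hs : s ∈ S) (hsx : G.Adj s x) :
    delIndepSet G A S = delIndepSet G (A.erase x) S := by
  ext y
  simp only [mem_delIndepSet, mem_erase]
  exact ⟨fun ⟨hyA, hyS, hSy⟩ => ⟨⟨by rintro rfl; exact hSy s hs hsx, hyA⟩, hyS, hSy⟩,
    fun ⟨⟨_, hyA⟩, hy⟩ => ⟨hyA, hy⟩⟩

lemma delClosedNbhd_delIndepSet :
    delClosedNbhd G (delIndepSet G A S) x = delIndepSet G (delClosedNbhd G A x) S := by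
  ext y
  simp only [mem_delIndepSet, mem_delClosedNbhd]
  tauto

lemma erase_delIndepSet : (delIndepSet G A S).erase x = delIndepSet G (A.erase x) S := by
  ext y
  simp only [mem_delIndepSet, mem_erase]
  tauto

omit [DecidableEq V] in
lemma IsIndepIn.mono {A' : Finset V} (hS : IsIndepIn G A S) (hTS : T ⊆ S) (hTA' : T ⊆ A') :
    IsIndepIn G A' T :=
  ⟨hTA', fun u hu v hv => hS.2 u (hTS hu) v (hTS hv)⟩

lemma IsIndepIn.insert (hS : IsIndepIn G A S) (hy : y ∈ A) (hSy : ∀ s ∈ S, ¬G.Adj s y) :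
    IsIndepIn G A (insert y S) := by
  refine ⟨insert_subset hy hS.1, fun u hu v hv => ?_⟩
  rcases mem_insert.1 hu with rfl | hu' <;> rcases mem_insert.1 hv with rfl | hv'
  · exact G.irrefl
  · exact fun h => hSy v hv' h.symm
  · exact hSy u hu'
  · exact hS.2 u hu' v hv'

lemma IsIndepIn.union (hS : IsIndepIn G A S) (hT : IsIndepIn G (delIndepSet G A S) T) :
    IsIndepIn G A (S ∪ T) := by
  refine ⟨union_subset hS.1 (hT.1.trans delIndepSet_subset), fun u hu v hv => ?_⟩
  rcases mem_union.1 hu with hu | hu <;> rcases mem_union.1 hv with hv | hv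
  · exact hS.2 u hu v hv
  · exact (mem_delIndepSet.1 (hT.1 hv)).2.2 u hu
  · exact fun h => (mem_delIndepSet.1 (hT.1 hu)).2.2 v hv h.symm
  · exact hT.2 u hu v hv

lemma IsIndepIn.erase_of_notMem (hS : IsIndepIn G A S) (hx : x ∉ S) :
    IsIndepIn G (A.erase x) S :=
  ⟨fun s hs => mem_erase.2 ⟨by rintro rfl; exact hx hs, hS.1 hs⟩, hS.2⟩

lemma IsIndepIn.erase_delClosedNbhd (hS : IsIndepIn G A S) (hx : x ∈ S) :
    IsIndepIn G (delClosedNbhd G A x) (S.erase x) :=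
  hS.mono (erase_subset _ _) fun s hs => mem_delClosedNbhd.2
    ⟨hS.1 (mem_of_mem_erase hs), ne_of_mem_erase hs, hS.2 x hx s (mem_of_mem_erase hs)⟩

lemma isIndepIn_delClosedNbhd_of_not_adj (hS : IsIndepIn G A S) (hx : x ∉ S)
    (hSx : ∀ s ∈ S, ¬G.Adj s x) : IsIndepIn G (delClosedNbhd G A x) S :=
  ⟨fun s hs => mem_delClosedNbhd.2 ⟨hS.1 hs, by rintro rfl; exact hx hs,
    fun h => hSx s hs h.symm⟩, hS.2⟩

lemma exists_adj_isIndepIn_insert_delIndepSet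
    (hexch : ∀ T, IsIndepIn G (delClosedNbhd G A x) T →
      ∃ y ∈ A, G.Adj x y ∧ IsIndepIn G (A.erase x) (insert y T))
    (hS : IsIndepIn G (delClosedNbhd G A x) S)
    (hT : IsIndepIn G (delIndepSet G (delClosedNbhd G A x) S) T) :
    ∃ y ∈ delIndepSet G A S, G.Adj x y ∧
      IsIndepIn G ((delIndepSet G A S).erase x) (insert y T) := by
  obtain ⟨y, hyA, hxy, hyST⟩ := hexch _ (hS.union hT)
  have hy : y ∈ delIndepSet G A S := mem_delIndepSet.2 ⟨hyA,
    fun hyS => (mem_delClosedNbhd.1 (hS.1 hyS)).2.2 hxy,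
    fun s hs => hyST.2 s (mem_insert_of_mem (mem_union_left _ hs)) y (mem_insert_self _ _)⟩
  have hTsub : T ⊆ (delIndepSet G A S).erase x := by
    rw [← delClosedNbhd_delIndepSet] at hT
    exact hT.1.trans delClosedNbhd_subset_erase
  exact ⟨y, hy, hxy, hyST.mono (insert_subset_insert _ subset_union_right)
    (insert_subset (mem_erase.2 ⟨(G.ne_of_adj hxy).symm, hy⟩) hTsub)⟩

theorem VertexDecomposableOn.restrict_delIndepSet (hvd : VertexDecomposableOn G A)
    (hS : IsIndepIn G A S) : VertexDecomposableOn G (delIndepSet G A S) := by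
  induction hvd generalizing S with
  | edgeless A hA =>
    exact .edgeless _ fun u hu v hv => hA u (delIndepSet_subset hu) v (delIndepSet_subset hv)
  | shed A x hx _ _ hexch ihlink ihdel =>
    by_cases hxS : x ∈ S
    · rw [delIndepSet_eq_of_mem hxS]
      exact ihlink (hS.erase_delClosedNbhd hxS)
    by_cases hSx : ∃ s ∈ S, G.Adj s x
    · obtain ⟨s, hs, hsx⟩ := hSx
      rw [delIndepSet_eq_of_adj hs hsx]
      exact ihdel (hS.erase_of_notMem hxS)
    push Not at hSx
    have hS' := isIndepIn_delClosedNbhd_of_not_adj hS hxS hSx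
    refine .shed _ x (mem_delIndepSet.2 ⟨hx, hxS, hSx⟩) ?_ ?_ fun T hT => ?_
    · rw [delClosedNbhd_delIndepSet]
      exact ihlink hS'
    · rw [erase_delIndepSet]
      exact ihdel (hS.erase_of_notMem hxS)
    · rw [delClosedNbhd_delIndepSet] at hT
      exact exists_adj_isIndepIn_insert_delIndepSet hexch hS' hT

lemma delClosedNbhd_congr (h : ∀ v ∈ A, G.Adj x v ↔ G'.Adj x v) :
    delClosedNbhd G A x = delClosedNbhd G' A x := by
  ext y
  simp only [mem_delClosedNbhd]
  constructor <;> rintro ⟨hy, hyx, hxy⟩ <;> exact ⟨hy, hyx, by simpa [h y hy] using hxy⟩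

omit [DecidableEq V] in
lemma isIndepIn_congr (h : ∀ u ∈ A, ∀ v ∈ A, G.Adj u v ↔ G'.Adj u v) :
    IsIndepIn G A S ↔ IsIndepIn G' A S :=
  and_congr_right fun hSA => forall₂_congr fun u hu => forall₂_congr fun v hv => by
    rw [h u (hSA hu) v (hSA hv)]

theorem VertexDecomposableOn.congr (hvd : VertexDecomposableOn G A)
    (h : ∀ u ∈ A, ∀ v ∈ A, G.Adj u v ↔ G'.Adj u v) : VertexDecomposableOn G' A := by
  induction hvd with
  | edgeless A hA => exact .edgeless _ fun u hu v hv => (h u hu v hv).not.1 (hA u hu v hv)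
  | shed A x hx _ _ hexch ihlink ihdel =>
    have hon : ∀ {A'}, A' ⊆ A → ∀ u ∈ A', ∀ v ∈ A', G.Adj u v ↔ G'.Adj u v :=
      fun hA' u hu v hv => h u (hA' hu) v (hA' hv)
    have hlink := delClosedNbhd_congr fun v hv => h x hx v hv
    refine .shed _ x hx (hlink ▸ ihlink (hon delClosedNbhd_subset))
      (ihdel (hon (erase_subset _ _))) fun S hS => ?_
    rw [← hlink, ← isIndepIn_congr (hon delClosedNbhd_subset)] at hS
    obtain ⟨y, hyA, hxy, hyS⟩ := hexch S hS
    exact ⟨y, hyA, (h x hx y hyA).1 hxy, (isIndepIn_congr (hon (erase_subset _ _))).1 hyS⟩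

end Link

section MaxIndep

variable {G : SimpleGraph V} {A S T : Finset V} {y : V}

omit [DecidableEq V] in
lemma IsIndepIn.exists_isMaxIndepIn_superset (hS : IsIndepIn G A S) :
    ∃ T, S ⊆ T ∧ IsMaxIndepIn G A T := by
  classical
  obtain ⟨T, hST, hT⟩ := (A.powerset.filter (IsIndepIn G A)).exists_le_maximal
    (mem_filter.2 ⟨mem_powerset.2 hS.1, hS⟩)
  refine ⟨T, hST, (mem_filter.1 hT.1).2, fun T' hT' hTT' => ?_⟩
  exact le_antisymm hTT' (hT.2 (mem_filter.2 ⟨mem_powerset.2 hT'.1, hT'⟩) hTT')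

lemma IsMaxIndepIn.mem_or_exists_adj (hT : IsMaxIndepIn G A T) (hy : y ∈ A) :
    y ∈ T ∨ ∃ s ∈ T, G.Adj s y := by
  by_contra! h
  obtain ⟨hyT, hTy⟩ := h
  exact hyT ((hT.2 _ (hT.1.insert hy hTy) (subset_insert _ _)) ▸ mem_insert_self y T)

omit [DecidableEq V] in
lemma exists_isMaxIndepIn_notMem {x : V} (hx : x ∈ A) (hA : 2 ≤ A.card)
    (hG : (G.induce (A : Set V)).Connected) : ∃ T, IsMaxIndepIn G A T ∧ x ∉ T := by
  have : Nontrivial (A : Set V) := Set.nontrivial_coe_sort.2 (one_lt_card_iff_nontrivial.1 hA)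
  obtain ⟨⟨u, hu⟩, hxu⟩ := hG.preconnected.exists_adj_of_nontrivial ⟨x, hx⟩
  have hu : IsIndepIn G A {u} := ⟨singleton_subset_iff.2 hu, by simp⟩
  obtain ⟨T, huT, hT⟩ := hu.exists_isMaxIndepIn_superset
  exact ⟨T, hT, fun hxT => hT.1.2 x hxT u (huT (mem_singleton_self u)) hxu⟩

end MaxIndep

/-- The conditions under which `G ⊔ ⨆ i, Gs i` is the attachment graph `G(G_1, …, G_n)`, with
`Gs i` living on the block `B i` and glued to `G` at `x i`. -/
structure IsAttachment {ι : Type*} (x : ι → V) (B : ι → Finset V) (G : SimpleGraph V)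
    (Gs : ι → SimpleGraph V) : Prop where
  base_adj : ∀ u v, G.Adj u v → (∃ i, u = x i) ∧ (∃ j, v = x j)
  mem_block : ∀ i, x i ∈ B i
  disjoint : ∀ i j, i ≠ j → Disjoint (B i) (B j)
  block_adj : ∀ i, ∀ u v, (Gs i).Adj u v → u ∈ B i ∧ v ∈ B i

namespace IsAttachment

variable {ι : Type*} {x : ι → V} {B : ι → Finset V} {G : SimpleGraph V}
  {Gs : ι → SimpleGraph V} {T : ι → Finset V} {i j k : ι} {u v : V}

omit [DecidableEq V] in
lemma eq_of_mem_block (h : IsAttachment x B G Gs) (hj : u ∈ B j) (hk : u ∈ B k) : j = k := by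
  by_contra hjk
  exact disjoint_left.1 (h.disjoint j k hjk) hj hk

omit [DecidableEq V] in
lemma adj_cases (h : IsAttachment x B G Gs) (hadj : (G ⊔ ⨆ k, Gs k).Adj u v) (hu : u ∈ B j)
    (hv : v ∈ B k) : (j = k ∧ (Gs j).Adj u v) ∨ (u = x j ∧ v = x k) := by
  rcases (SimpleGraph.sup_adj _ _ _ _).1 hadj with hG | hGs
  · obtain ⟨⟨a, rfl⟩, ⟨b, rfl⟩⟩ := h.base_adj _ _ hG
    obtain rfl := h.eq_of_mem_block (h.mem_block a) hu
    obtain rfl := h.eq_of_mem_block (h.mem_block b) hv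
    exact .inr ⟨rfl, rfl⟩
  · obtain ⟨m, hm⟩ := SimpleGraph.iSup_adj.1 hGs
    obtain ⟨hum, hvm⟩ := h.block_adj m u v hm
    obtain rfl := h.eq_of_mem_block hum hu
    obtain rfl := h.eq_of_mem_block hvm hv
    exact .inl ⟨rfl, hm⟩

omit [DecidableEq V] in
lemma adj_iff_of_mem_block (h : IsAttachment x B G Gs) (hu : u ∈ B i) (hv : v ∈ B i) :
    (G ⊔ ⨆ k, Gs k).Adj u v ↔ (Gs i).Adj u v := by
  refine ⟨fun hadj => ?_, fun hadj => le_sup_of_le_right (le_iSup Gs i) hadj⟩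
  rcases h.adj_cases hadj hu hv with ⟨-, hadj⟩ | ⟨rfl, rfl⟩
  · exact hadj
  · exact absurd hadj (SimpleGraph.irrefl _)

variable [Fintype ι]

lemma isIndepIn_biUnion (h : IsAttachment x B G Gs) (hT : ∀ j, IsIndepIn (Gs j) (B j) (T j))
    (hxT : ∀ j, x j ∉ T j) (s : Finset ι) :
    IsIndepIn (G ⊔ ⨆ k, Gs k) (univ.biUnion B) (s.biUnion T) := by
  refine ⟨fun u hu => ?_, fun u hu v hv hadj => ?_⟩
  · obtain ⟨j, -, huj⟩ := mem_biUnion.1 hu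
    exact mem_biUnion.2 ⟨j, mem_univ j, (hT j).1 huj⟩
  obtain ⟨j, -, huj⟩ := mem_biUnion.1 hu
  obtain ⟨k, -, hvk⟩ := mem_biUnion.1 hv
  rcases h.adj_cases hadj ((hT j).1 huj) ((hT k).1 hvk) with ⟨rfl, hadj⟩ | ⟨rfl, -⟩
  · exact (hT j).2 u huj v hvk hadj
  · exact hxT j huj

lemma delIndepSet_biUnion [DecidableEq ι] (h : IsAttachment x B G Gs)
    (hT : ∀ j, IsMaxIndepIn (Gs j) (B j) (T j)) (hxT : ∀ j, x j ∉ T j) (s : Finset ι) :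
    delIndepSet (G ⊔ ⨆ k, Gs k) (univ.biUnion B) (s.biUnion T) = (univ \ s).biUnion B := by
  ext y
  simp only [mem_delIndepSet, mem_biUnion, mem_univ, true_and, mem_sdiff]
  constructor
  · rintro ⟨⟨k, hyk⟩, hyS, hSy⟩
    refine ⟨k, fun hks => ?_, hyk⟩
    rcases (hT k).mem_or_exists_adj hyk with hyT | ⟨t, htT, hty⟩
    · exact hyS ⟨k, hks, hyT⟩
    · exact hSy t ⟨k, hks, htT⟩ (le_sup_of_le_right (le_iSup Gs k) hty)
  · rintro ⟨k, hks, hyk⟩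
    refine ⟨⟨k, hyk⟩, fun ⟨j, hjs, hyT⟩ => ?_, fun t ⟨j, hjs, htT⟩ hty => ?_⟩
    · obtain rfl := h.eq_of_mem_block ((hT j).1.1 hyT) hyk
      exact hks hjs
    · rcases h.adj_cases hty ((hT j).1.1 htT) hyk with ⟨rfl, -⟩ | ⟨rfl, -⟩
      · exact hks hjs
      · exact hxT j htT

end IsAttachment

theorem stmt_1_general {V : Type*} [DecidableEq V] (n : ℕ) (x : Fin n → V) (B : Fin n → Finset V)
    (G : SimpleGraph V) (Gs : Fin n → SimpleGraph V)
    (hGsupp : ∀ u v, G.Adj u v → (∃ i, u = x i) ∧ (∃ j, v = x j))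
    (hxB : ∀ i, x i ∈ B i)
    (hBcard : ∀ i, 2 ≤ (B i).card)
    (hBdisj : ∀ i j, i ≠ j → Disjoint (B i) (B j))
    (hGssupp : ∀ i, ∀ u v, (Gs i).Adj u v → u ∈ B i ∧ v ∈ B i)
    (hconn : ∀ i, ((Gs i).induce ((B i : Set V))).Connected)
    (hvd : VertexDecomposableOn (G ⊔ ⨆ i, Gs i) (Finset.univ.biUnion B)) :
    ∀ i, VertexDecomposableOn (Gs i) (B i) := by
  intro i
  have hatt : IsAttachment x B G Gs := ⟨hGsupp, hxB, hBdisj, hGssupp⟩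
  choose T hT hxT using fun j => exists_isMaxIndepIn_notMem (hxB j) (hBcard j) (hconn j)
  have hlink :=
    hvd.restrict_delIndepSet (hatt.isIndepIn_biUnion (fun j => (hT j).1) hxT (univ.erase i))
  rw [hatt.delIndepSet_biUnion hT hxT, sdiff_erase_self (mem_univ i), singleton_biUnion] at hlink
  exact hlink.congr fun u hu v hv => hatt.adj_iff_of_mem_block hu hv

/-- If the attachment graph `G(G_1, …, G_n)` is vertex decomposable, then
each `Gs i` is vertex decomposable. -/
theorem stmt_1 {V : Type*} [DecidableEq V] (n : ℕ) (x : Fin n → V) (B : Fin n → Finset V)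
    (G : SimpleGraph V) (Gs : Fin n → SimpleGraph V)
    (hxinj : Function.Injective x)
    (hGsupp : ∀ u v, G.Adj u v → (∃ i, u = x i) ∧ (∃ j, v = x j))
    (hxB : ∀ i, x i ∈ B i)
    (hBcard : ∀ i, 2 ≤ (B i).card)
    (hBdisj : ∀ i j, i ≠ j → Disjoint (B i) (B j))
    (hGssupp : ∀ i, ∀ u v, (Gs i).Adj u v → u ∈ B i ∧ v ∈ B i)
    (hconn : ∀ i, ((Gs i).induce ((B i : Set V))).Connected)
    (hvd : VertexDecomposableOn (G ⊔ ⨆ i, Gs i) (Finset.univ.biUnion B)) :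
    ∀ i, VertexDecomposableOn (Gs i) (B i) :=
  stmt_1_general n x B G Gs hGsupp hxB hBcard hBdisj hGssupp hconn hvd
end

section
/- Let G be a finite simple graph on vertex set {x_{11}, …, x_{n1}} with no isolated vertex, let m_1, …, m_n ≥ 2 be integers, and let G_1, …, G_n be connected finite simple graphs with V(G_i) = {x_{i1}, …, x_{im_i}}. Then the attachment graph G(G_1, …, G_n) is unmixed if and only if, for every i = 1, …, n, both G_i and G_i \ {x_{i1}} are unmixed. -/
variable {V : Type*} [DecidableEq V]

/-! A maximal independent set `S` of the attachment graph meets each block `B i` in a maximal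
independent set of `Gs i`, on `B i` if `x i ∈ S` and on `B i \ {x i}` otherwise. Since `x i` has a
neighbour in its connected block, every block has a maximal independent set `D i` avoiding its
root, which is maximal on `B i \ {x i}` as well; so if both restrictions are unmixed, every `S`
meets every block in `#(D i)` vertices.

Conversely, any maximal independent set `N` of `Gs i` on `B i` extends by the `D k`, `k ≠ i`, to a
maximal independent set of the attachment graph. If `N` is maximal on `B i \ {x i}`, pick a
`G`-neighbour `x j` of `x i` and use in block `j` a maximal set through `x j`, which dominates
`x i`. Only block `i` varies, so unmixedness of the whole graph forces `#N` to be constant. -/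

open Finset Function

section IndependentSets

variable {α : Type*} {G : SimpleGraph α} {A A' S : Finset α}

theorem isIndepIn_singleton {a : α} (ha : a ∈ A) : IsIndepIn G A {a} := by
  refine ⟨singleton_subset_iff.2 ha, ?_⟩
  simp only [mem_singleton]
  rintro u rfl v rfl
  exact G.irrefl

theorem IsIndepIn.exists_isMaxIndepIn (h : IsIndepIn G A S) :
    ∃ T, S ⊆ T ∧ IsMaxIndepIn G A T := by
  classical
  obtain ⟨T, hT, hTmax⟩ := exists_max_image
    (A.powerset.filter fun T => IsIndepIn G A T ∧ S ⊆ T) card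
    ⟨S, mem_filter.2 ⟨mem_powerset.2 h.1, h, subset_rfl⟩⟩
  obtain ⟨-, hTind, hST⟩ := mem_filter.1 hT
  refine ⟨T, hST, hTind, fun T' hT' hTT' => ?_⟩
  exact eq_of_subset_of_card_le hTT' <| hTmax T' <|
    mem_filter.2 ⟨mem_powerset.2 hT'.1, hT', hST.trans hTT'⟩

theorem isMaxIndepIn_iff :
    IsMaxIndepIn G A S ↔ IsIndepIn G A S ∧ ∀ y ∈ A, y ∉ S → ∃ z ∈ S, G.Adj y z := by
  classical
  refine ⟨fun h => ⟨h.1, fun y hy hyS => ?_⟩,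
    fun ⟨hS, hdom⟩ => ⟨hS, fun T hT hST => ?_⟩⟩
  · by_contra! hno
    have hins : IsIndepIn G A (insert y S) := by
      refine ⟨insert_subset hy h.1.1, ?_⟩
      simp only [mem_insert]
      rintro u (rfl | hu) v (rfl | hv) huv
      · exact G.irrefl huv
      · exact hno v hv huv
      · exact hno u hu huv.symm
      · exact h.1.2 u hu v hv huv
    exact hyS (h.2 _ hins (subset_insert y S) ▸ mem_insert_self y S)
  · refine Finset.Subset.antisymm hST fun y hyT => ?_
    by_contra hyS
    obtain ⟨z, hz, hyz⟩ := hdom y (hT.1 hyT) hyS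
    exact hT.2 y hyT z (hST hz) hyz

theorem IsMaxIndepIn.exists_adj (h : IsMaxIndepIn G A S) {y : α} (hy : y ∈ A) (hyS : y ∉ S) :
    ∃ z ∈ S, G.Adj y z :=
  (isMaxIndepIn_iff.1 h).2 y hy hyS

theorem IsMaxIndepIn.of_subset (h : IsMaxIndepIn G A S) (hSA' : S ⊆ A') (hA'A : A' ⊆ A) :
    IsMaxIndepIn G A' S :=
  ⟨⟨hSA', h.1.2⟩, fun T hT hST => h.2 T ⟨hT.1.trans hA'A, hT.2⟩ hST⟩

theorem exists_isMaxIndepIn_mem {a : α} (ha : a ∈ A) :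
    ∃ T, IsMaxIndepIn G A T ∧ a ∈ T :=
  let ⟨T, haT, hT⟩ := (isIndepIn_singleton (G := G) ha).exists_isMaxIndepIn
  ⟨T, hT, haT (mem_singleton_self a)⟩

theorem exists_isMaxIndepIn_notMem_s8 {a b : α} (hb : b ∈ A) (hab : G.Adj a b) :
    ∃ T, IsMaxIndepIn G A T ∧ a ∉ T :=
  let ⟨T, hT, hbT⟩ := exists_isMaxIndepIn_mem (G := G) hb
  ⟨T, hT, fun haT => hT.1.2 a haT b hbT hab⟩

end IndependentSets

theorem SimpleGraph.Connected.exists_adj_of_two_le_card {α : Type*} {G : SimpleGraph α}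
    {B : Finset α} (hG : (G.induce (B : Set α)).Connected) (hB : 2 ≤ B.card) {a : α}
    (ha : a ∈ B) : ∃ b ∈ B, G.Adj a b := by
  have : Nontrivial (B : Set α) :=
    Set.nontrivial_coe_sort.2 (one_lt_card_iff_nontrivial.1 hB)
  obtain ⟨b, hab⟩ := hG.preconnected.exists_adj_of_nontrivial ⟨a, ha⟩
  exact ⟨b, b.2, hab⟩

theorem card_biUnion_update {α ι : Type*} [DecidableEq α] [Fintype ι] [DecidableEq ι]
    {B T : ι → Finset α} (hB : Pairwise (Disjoint on B)) (hT : ∀ k, T k ⊆ B k) {i : ι}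
    {N : Finset α} (hN : N ⊆ B i) :
    (univ.biUnion (update T i N)).card =
      N.card + ∑ k ∈ univ.erase i, (T k).card := by
  have hsub : ∀ k, update T i N k ⊆ B k :=
    (forall_update_iff T fun k U => U ⊆ B k).2 ⟨hN, fun k _ => hT k⟩
  rw [card_biUnion fun k _ l _ hkl => (hB hkl).mono (hsub k) (hsub l),
    ← add_sum_erase _ _ (mem_univ i), update_self]
  congr 1
  exact sum_congr rfl fun k hk => by rw [update_of_ne (ne_of_mem_erase hk)]

theorem card_eq_sum_card_inter {α ι : Type*} [DecidableEq α] [Fintype ι] {B : ι → Finset α}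
    (hB : Pairwise (Disjoint on B)) {S : Finset α} (hS : S ⊆ univ.biUnion B) :
    S.card = ∑ k, (S ∩ B k).card := by
  rw [← card_biUnion fun k _ l _ hkl =>
      (hB hkl).mono inter_subset_right inter_subset_right,
    ← inter_biUnion, inter_eq_left.2 hS]

structure IsAttachment_s8 {α ι : Type*} (x : ι → α) (B : ι → Finset α) (G : SimpleGraph α)
    (Gs : ι → SimpleGraph α) : Prop where
  adj_root : ∀ u v, G.Adj u v → (∃ i, u = x i) ∧ (∃ j, v = x j)
  root_mem : ∀ i, x i ∈ B i
  disjoint : Pairwise (Disjoint on B)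
  adj_mem : ∀ i, ∀ u v, (Gs i).Adj u v → u ∈ B i ∧ v ∈ B i

namespace IsAttachment_s8

variable {α ι : Type*} {x : ι → α} {B : ι → Finset α} {G : SimpleGraph α}
  {Gs : ι → SimpleGraph α}

theorem eq_of_mem_of_mem (hA : IsAttachment_s8 x B G Gs) {i j : ι} {u : α} (hi : u ∈ B i)
    (hj : u ∈ B j) : i = j := by
  by_contra hij
  exact disjoint_left.1 (hA.disjoint hij) hi hj

theorem adj_of_mem_of_ne (hA : IsAttachment_s8 x B G Gs) {i : ι} {u v : α} (hu : u ∈ B i)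
    (hux : u ≠ x i) (huv : (G ⊔ ⨆ k, Gs k).Adj u v) : (Gs i).Adj u v := by
  simp only [SimpleGraph.sup_adj, SimpleGraph.iSup_adj] at huv
  rcases huv with hG | ⟨k, hk⟩
  · obtain ⟨⟨k, rfl⟩, -⟩ := hA.adj_root u v hG
    exact absurd (congrArg x (hA.eq_of_mem_of_mem (hA.root_mem k) hu)) hux
  · rwa [← hA.eq_of_mem_of_mem (hA.adj_mem k u v hk).1 hu]

theorem isMaxIndepIn_inter [DecidableEq α] [Fintype ι] (hA : IsAttachment_s8 x B G Gs)
    {S C : Finset α} {i : ι}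
    (hS : IsMaxIndepIn (G ⊔ ⨆ k, Gs k) (univ.biUnion B) S) (hSC : S ∩ B i ⊆ C)
    (hCB : C ⊆ B i) (hxC : x i ∈ C → x i ∈ S) : IsMaxIndepIn (Gs i) C (S ∩ B i) := by
  refine isMaxIndepIn_iff.2 ⟨⟨hSC, fun u hu v hv huv => ?_⟩, fun y hyC hyS => ?_⟩
  · exact hS.1.2 u (mem_inter.1 hu).1 v (mem_inter.1 hv).1
      (SimpleGraph.sup_adj _ _ _ _ |>.2 <| Or.inr <| SimpleGraph.iSup_adj.2 ⟨i, huv⟩)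
  have hyB := hCB hyC
  have hyS' : y ∉ S := fun h => hyS (mem_inter.2 ⟨h, hyB⟩)
  have hyx : y ≠ x i := by rintro rfl; exact hyS' (hxC hyC)
  obtain ⟨z, hz, hyz⟩ := hS.exists_adj (mem_biUnion.2 ⟨i, mem_univ i, hyB⟩) hyS'
  have hyz' := hA.adj_of_mem_of_ne hyB hyx hyz
  exact ⟨z, mem_inter.2 ⟨hz, (hA.adj_mem i y z hyz').2⟩, hyz'⟩

theorem isMaxIndepIn_biUnion [DecidableEq α] [Fintype ι] (hA : IsAttachment_s8 x B G Gs)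
    {T : ι → Finset α}
    (hT : ∀ k, IsIndepIn (Gs k) (B k) (T k))
    (hroot : ∀ k l, x k ∈ T k → x l ∈ T l → ¬G.Adj (x k) (x l))
    (hdom : ∀ k, ∀ y ∈ B k, y ∉ T k →
      (∃ z ∈ T k, (Gs k).Adj y z) ∨ ∃ l, x l ∈ T l ∧ G.Adj y (x l)) :
    IsMaxIndepIn (G ⊔ ⨆ k, Gs k) (univ.biUnion B) (univ.biUnion T) := by
  have hmem {u : α} : u ∈ univ.biUnion T ↔ ∃ k, u ∈ T k := by simp
  refine isMaxIndepIn_iff.2 ⟨⟨biUnion_mono fun k _ => (hT k).1, ?_⟩, ?_⟩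
  · intro u hu v hv huv
    obtain ⟨a, hua⟩ := hmem.1 hu
    obtain ⟨b, hvb⟩ := hmem.1 hv
    rcases SimpleGraph.sup_adj _ _ _ _ |>.1 huv with hG | hGs
    · obtain ⟨⟨c, rfl⟩, ⟨d, rfl⟩⟩ := hA.adj_root u v hG
      obtain rfl := hA.eq_of_mem_of_mem (hA.root_mem c) ((hT a).1 hua)
      obtain rfl := hA.eq_of_mem_of_mem (hA.root_mem d) ((hT b).1 hvb)
      exact hroot c d hua hvb hG
    · obtain ⟨k, hk⟩ := SimpleGraph.iSup_adj.1 hGs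
      obtain rfl := hA.eq_of_mem_of_mem ((hT a).1 hua) (hA.adj_mem k u v hk).1
      obtain rfl := hA.eq_of_mem_of_mem ((hT b).1 hvb) (hA.adj_mem a u v hk).2
      exact (hT b).2 u hua v hvb hk
  · intro y hy hyT
    obtain ⟨k, -, hyB⟩ := mem_biUnion.1 hy
    rcases hdom k y hyB fun h => hyT (hmem.2 ⟨k, h⟩) with ⟨z, hz, hyz⟩ | ⟨l, hl, hyl⟩
    · exact ⟨z, hmem.2 ⟨k, hz⟩, SimpleGraph.sup_adj _ _ _ _ |>.2 <| Or.inr <|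
        SimpleGraph.iSup_adj.2 ⟨k, hyz⟩⟩
    · exact ⟨x l, hmem.2 ⟨l, hl⟩, SimpleGraph.sup_adj _ _ _ _ |>.2 <| Or.inl hyl⟩

theorem isMaxIndepIn_biUnion_update [DecidableEq α] [Fintype ι] [DecidableEq ι]
    (hA : IsAttachment_s8 x B G Gs) {D : ι → Finset α}
    (hD : ∀ k, IsMaxIndepIn (Gs k) (B k) (D k))
    (hxD : ∀ k, x k ∉ D k) {i : ι} {N : Finset α} (hN : IsMaxIndepIn (Gs i) (B i) N) :
    IsMaxIndepIn (G ⊔ ⨆ k, Gs k) (univ.biUnion B) (univ.biUnion (update D i N)) := by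
  have hroot : ∀ k, x k ∈ update D i N k → k = i :=
    (forall_update_iff D fun k U => x k ∈ U → k = i).2
      ⟨fun _ => rfl, fun k _ hk => absurd hk (hxD k)⟩
  have hblock : ∀ k, IsMaxIndepIn (Gs k) (B k) (update D i N k) :=
    (forall_update_iff D fun k U => IsMaxIndepIn (Gs k) (B k) U).2 ⟨hN, fun k _ => hD k⟩
  refine hA.isMaxIndepIn_biUnion (fun k => (hblock k).1) (fun k l hk hl => ?_)
    fun k z hz hzT => Or.inl ((hblock k).exists_adj hz hzT)
  obtain rfl := hroot k hk
  obtain rfl := hroot l hl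
  exact G.irrefl

theorem isMaxIndepIn_biUnion_update_erase [DecidableEq α] [Fintype ι] [DecidableEq ι]
    (hA : IsAttachment_s8 x B G Gs) {T : ι → Finset α}
    (hT : ∀ k, IsMaxIndepIn (Gs k) (B k) (T k))
    {i j : ι} (hxT : ∀ k, x k ∈ T k ↔ k = j) (hij : G.Adj (x i) (x j)) {N : Finset α}
    (hN : IsMaxIndepIn (Gs i) ((B i).erase (x i)) N) :
    IsMaxIndepIn (G ⊔ ⨆ k, Gs k) (univ.biUnion B) (univ.biUnion (update T i N)) := by
  have hji : j ≠ i := by rintro rfl; exact G.irrefl hij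
  have hroot : ∀ k, x k ∈ update T i N k → k = j :=
    (forall_update_iff T fun k U => x k ∈ U → k = j).2
      ⟨fun hxN => absurd rfl (mem_erase.1 (hN.1.1 hxN)).1, fun k _ => (hxT k).1⟩
  refine hA.isMaxIndepIn_biUnion
    ((forall_update_iff T fun k U => IsIndepIn (Gs k) (B k) U).2
      ⟨⟨hN.1.1.trans (erase_subset _ _), hN.1.2⟩, fun k _ => (hT k).1⟩)
    (fun k l hk hl => ?_)
    ((forall_update_iff T fun k U => ∀ z ∈ B k, z ∉ U →
        (∃ w ∈ U, (Gs k).Adj z w) ∨ ∃ l, x l ∈ update T i N l ∧ G.Adj z (x l)).2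
      ⟨fun z hz hzN => ?_, fun k _ z hz hzT => Or.inl ((hT k).exists_adj hz hzT)⟩)
  · obtain rfl := hroot k hk
    obtain rfl := hroot l hl
    exact G.irrefl
  · by_cases hzx : z = x i
    · subst hzx
      exact Or.inr ⟨j, by rw [update_of_ne hji]; exact (hxT j).2 rfl, hij⟩
    · exact Or.inl (hN.exists_adj (mem_erase.2 ⟨hzx, hz⟩) hzN)

theorem card_eq_of_isMaxIndepIn_update [DecidableEq α] [Fintype ι] [DecidableEq ι]
    (hA : IsAttachment_s8 x B G Gs) (hU : UnmixedOn (G ⊔ ⨆ k, Gs k) (univ.biUnion B))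
    {T : ι → Finset α} (hT : ∀ k, T k ⊆ B k) {i : ι} {N N' : Finset α} (hN : N ⊆ B i)
    (hN' : N' ⊆ B i)
    (hS : IsMaxIndepIn (G ⊔ ⨆ k, Gs k) (univ.biUnion B) (univ.biUnion (update T i N)))
    (hS' : IsMaxIndepIn (G ⊔ ⨆ k, Gs k) (univ.biUnion B) (univ.biUnion (update T i N'))) :
    N.card = N'.card := by
  have hcard := hU _ _ hS hS'
  rw [card_biUnion_update hA.disjoint hT hN, card_biUnion_update hA.disjoint hT hN'] at hcard
  omega

section RootlessFamily

variable [DecidableEq α] [Fintype ι] {D : ι → Finset α}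

theorem unmixedOn_block [DecidableEq ι] (hA : IsAttachment_s8 x B G Gs)
    (hD : ∀ k, IsMaxIndepIn (Gs k) (B k) (D k)) (hxD : ∀ k, x k ∉ D k)
    (hU : UnmixedOn (G ⊔ ⨆ k, Gs k) (univ.biUnion B)) (i : ι) :
    UnmixedOn (Gs i) (B i) := fun _ _ hN hN' =>
  hA.card_eq_of_isMaxIndepIn_update hU (fun k => (hD k).1.1) hN.1.1 hN'.1.1
    (hA.isMaxIndepIn_biUnion_update hD hxD hN) (hA.isMaxIndepIn_biUnion_update hD hxD hN')

theorem unmixedOn_block_erase [DecidableEq ι] (hA : IsAttachment_s8 x B G Gs)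
    (hD : ∀ k, IsMaxIndepIn (Gs k) (B k) (D k)) (hxD : ∀ k, x k ∉ D k)
    (hnoiso : ∀ k, ∃ u, G.Adj (x k) u)
    (hU : UnmixedOn (G ⊔ ⨆ k, Gs k) (univ.biUnion B)) (i : ι) :
    UnmixedOn (Gs i) ((B i).erase (x i)) := by
  obtain ⟨u, hxu⟩ := hnoiso i
  obtain ⟨j, rfl⟩ := (hA.adj_root _ _ hxu).2
  obtain ⟨E, hE, hxE⟩ := exists_isMaxIndepIn_mem (G := Gs j) (hA.root_mem j)
  have hT : ∀ k, IsMaxIndepIn (Gs k) (B k) (update D j E k) :=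
    (forall_update_iff D fun k U => IsMaxIndepIn (Gs k) (B k) U).2 ⟨hE, fun k _ => hD k⟩
  have hxT : ∀ k, x k ∈ update D j E k ↔ k = j :=
    (forall_update_iff D fun k U => x k ∈ U ↔ k = j).2
      ⟨iff_of_true hxE rfl, fun k hkj => iff_of_false (hxD k) hkj⟩
  intro _ _ hN hN'
  exact hA.card_eq_of_isMaxIndepIn_update hU (fun k => (hT k).1.1)
    (hN.1.1.trans (erase_subset _ _)) (hN'.1.1.trans (erase_subset _ _))
    (hA.isMaxIndepIn_biUnion_update_erase hT hxT hxu hN)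
    (hA.isMaxIndepIn_biUnion_update_erase hT hxT hxu hN')

theorem unmixedOn_of_blocks (hA : IsAttachment_s8 x B G Gs)
    (hD : ∀ k, IsMaxIndepIn (Gs k) (B k) (D k)) (hxD : ∀ k, x k ∉ D k)
    (hblocks : ∀ k, UnmixedOn (Gs k) (B k) ∧ UnmixedOn (Gs k) ((B k).erase (x k))) :
    UnmixedOn (G ⊔ ⨆ k, Gs k) (univ.biUnion B) := by
  have hDerase : ∀ k, IsMaxIndepIn (Gs k) ((B k).erase (x k)) (D k) := fun k =>
    (hD k).of_subset (fun u hu => mem_erase.2 ⟨fun h => hxD k (h ▸ hu), (hD k).1.1 hu⟩)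
      (erase_subset _ _)
  have hcard : ∀ S, IsMaxIndepIn (G ⊔ ⨆ k, Gs k) (univ.biUnion B) S →
      ∀ k, (S ∩ B k).card = (D k).card := by
    intro S hS k
    by_cases hxS : x k ∈ S
    · exact (hblocks k).1 _ _
        (hA.isMaxIndepIn_inter hS inter_subset_right subset_rfl fun _ => hxS) (hD k)
    · refine (hblocks k).2 _ _ (hA.isMaxIndepIn_inter hS (fun u hu => ?_)
        (erase_subset _ _) fun h => absurd rfl (mem_erase.1 h).1) (hDerase k)
      obtain ⟨huS, huB⟩ := mem_inter.1 hu
      exact mem_erase.2 ⟨fun h => hxS (h ▸ huS), huB⟩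
  intro S S' hS hS'
  rw [card_eq_sum_card_inter hA.disjoint hS.1.1, card_eq_sum_card_inter hA.disjoint hS'.1.1]
  exact sum_congr rfl fun k _ => (hcard S hS k).trans (hcard S' hS' k).symm

end RootlessFamily

end IsAttachment_s8

theorem stmt_8_general {V : Type*} [DecidableEq V] (n : ℕ) (x : Fin n → V) (B : Fin n → Finset V)
    (G : SimpleGraph V) (Gs : Fin n → SimpleGraph V)
    (hGsupp : ∀ u v, G.Adj u v → (∃ i, u = x i) ∧ (∃ j, v = x j))
    -- `G` has no isolated vertex
    (hnoiso : ∀ i, ∃ u, G.Adj (x i) u)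
    (hxB : ∀ i, x i ∈ B i)
    (hBcard : ∀ i, 2 ≤ (B i).card)
    (hBdisj : ∀ i j, i ≠ j → Disjoint (B i) (B j))
    (hGssupp : ∀ i, ∀ u v, (Gs i).Adj u v → u ∈ B i ∧ v ∈ B i)
    (hconn : ∀ i, ((Gs i).induce ((B i : Set V))).Connected) :
    UnmixedOn (G ⊔ ⨆ i, Gs i) (Finset.univ.biUnion B) ↔
      ∀ i, UnmixedOn (Gs i) (B i) ∧ UnmixedOn (Gs i) ((B i).erase (x i)) := by
  have hA : IsAttachment_s8 x B G Gs := ⟨hGsupp, hxB, hBdisj, hGssupp⟩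
  have hroot_adj : ∀ i, ∃ y ∈ B i, (Gs i).Adj (x i) y := fun i =>
    (hconn i).exists_adj_of_two_le_card (hBcard i) (hxB i)
  choose y hy hxy using hroot_adj
  choose D hD hxD using fun i => exists_isMaxIndepIn_notMem_s8 (hy i) (hxy i)
  exact ⟨fun hU i =>
    ⟨hA.unmixedOn_block hD hxD hU i, hA.unmixedOn_block_erase hD hxD hnoiso hU i⟩,
    hA.unmixedOn_of_blocks hD hxD⟩

/-- If `G` has no isolated vertex, the attachment graph `G(G_1, …, G_n)` is
unmixed iff `Gs i` and `Gs i \ {x i}` are unmixed for every `i`. -/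
theorem stmt_8 {V : Type*} [DecidableEq V] (n : ℕ) (x : Fin n → V) (B : Fin n → Finset V)
    (G : SimpleGraph V) (Gs : Fin n → SimpleGraph V)
    (hxinj : Function.Injective x)
    (hGsupp : ∀ u v, G.Adj u v → (∃ i, u = x i) ∧ (∃ j, v = x j))
    -- `G` has no isolated vertex
    (hnoiso : ∀ i, ∃ u, G.Adj (x i) u)
    (hxB : ∀ i, x i ∈ B i)
    (hBcard : ∀ i, 2 ≤ (B i).card)
    (hBdisj : ∀ i j, i ≠ j → Disjoint (B i) (B j))
    (hGssupp : ∀ i, ∀ u v, (Gs i).Adj u v → u ∈ B i ∧ v ∈ B i)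
    (hconn : ∀ i, ((Gs i).induce ((B i : Set V))).Connected) :
    UnmixedOn (G ⊔ ⨆ i, Gs i) (Finset.univ.biUnion B) ↔
      ∀ i, UnmixedOn (Gs i) (B i) ∧ UnmixedOn (Gs i) ((B i).erase (x i)) :=
  stmt_8_general n x B G Gs hGsupp hnoiso hxB hBcard hBdisj hGssupp hconn
end
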